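/- arXiv:1811.06392 — 2 statements merged into one kernel-verified Lean document; each statement's English description precedes it below -/
import Mathlib

section
/- Let A : ℕ → ℕ be defined by A(0) = 1, A(1) = 2, and A(n) = 1 + C(A(n−2)+1, 2) + A(n−2)·(A(n−1) − A(n−2)) for n ≥ 2. Then for all n ≥ 2, one has 2·A(n) ≥ A(n−1)·A(n−2). -/
/-
Write `a = A n` and `b = A (n + 1)`. Since `2 * C(a + 1, 2) = a * (a + 1)`, the recurrence reads
`2 * A (n + 2) = 2 + a * (a + 1) + 2 * a * (b - a)`, so `2 * A (n + 2) - a * b = 2 + a + a * (b - a)`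
when `a ≤ b`. That `A` is nondecreasing needs no induction: from `a ≥ 1` the same identity gives
`2 * A (n + 2) ≥ 2 * a + 2 * (b - a) = 2 * b` when `a ≤ b`, and `2 * A (n + 2) > 2 * a > 2 * b` otherwise.
-/

def A : ℕ → ℕ
  | 0 => 1
  | 1 => 2
  | n + 2 => 1 + Nat.choose (A n + 1) 2 + A n * (A (n + 1) - A n)

lemma two_mul_choose_succ_two (a : ℕ) : 2 * Nat.choose (a + 1) 2 = a * (a + 1) := by
  rw [Nat.choose_two_right, Nat.add_sub_cancel, mul_comm (a + 1) a,
    Nat.mul_div_cancel' (Nat.even_mul_succ_self a).two_dvd]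

lemma two_mul_A_add_two (n : ℕ) :
    2 * A (n + 2) = 2 + A n * (A n + 1) + 2 * A n * (A (n + 1) - A n) := by
  rw [A, mul_add, mul_add, two_mul_choose_succ_two, mul_assoc]

lemma one_le_A : ∀ n, 1 ≤ A n
  | 0 | 1 => by decide
  | n + 2 => by rw [A]; omega

lemma A_succ_le_A_add_two (n : ℕ) : A (n + 1) ≤ A (n + 2) := by
  have hrec := two_mul_A_add_two n
  have hpos := one_le_A n
  rcases le_total (A n) (A (n + 1)) with hle | hlt
  · obtain ⟨c, hc⟩ := Nat.exists_eq_add_of_le hle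
    rw [hc, Nat.add_sub_cancel_left] at hrec
    rw [hc]
    nlinarith
  · nlinarith

lemma A_le_A_succ : ∀ n, A n ≤ A (n + 1)
  | 0 => by decide
  | n + 1 => A_succ_le_A_add_two n

theorem stmt_2 : ∀ n : ℕ, 2 ≤ n → A (n - 1) * A (n - 2) ≤ 2 * A n := by
  intro n hn
  obtain ⟨m, rfl⟩ := Nat.exists_eq_add_of_le' hn
  show A (m + 1) * A m ≤ 2 * A (m + 2)
  obtain ⟨c, hc⟩ := Nat.exists_eq_add_of_le (A_le_A_succ m)
  have hrec := two_mul_A_add_two m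
  rw [hc, Nat.add_sub_cancel_left] at hrec
  rw [hc]
  nlinarith
end

section
/- Let A : ℕ → ℕ be defined by A(0) = 1, A(1) = 2, and A(n) = 1 + C(A(n−2)+1, 2) + A(n−2)·(A(n−1) − A(n−2)) for n ≥ 2. Then the sequence of real numbers A(n)/A(n+1) tends to 0 as n → ∞. -/
/-! Since `A n ≤ A (n + 1)`, the recurrence gives
`2 A(n+2) ≥ A(n)² + 2 A(n) (A(n+1) - A(n)) ≥ A(n) A(n+1)`, so `A(n+1) / A(n+2) ≤ 2 / A(n)`,
and `A n → ∞` because `A` is strictly increasing. -/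

open Filter

lemma A_add_two (n : ℕ) :
    A (n + 2) = 1 + Nat.choose (A n + 1) 2 + A n * (A (n + 1) - A n) := rfl

lemma A_pos : ∀ n, 0 < A n
  | 0 | 1 => by decide
  | n + 2 => by rw [A_add_two]; omega

lemma A_lt_A_succ (n : ℕ) : A n < A (n + 1) := by
  induction n with
  | zero => decide
  | succ n ih =>
    have hchoose : A n ≤ Nat.choose (A n + 1) 2 := by
      rw [Nat.choose_succ_succ, Nat.choose_one_right]
      exact Nat.le_add_right _ _
    have hdiff : A (n + 1) - A n ≤ A n * (A (n + 1) - A n) :=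
      Nat.le_mul_of_pos_left _ (A_pos n)
    rw [A_add_two]
    omega

lemma strictMono_A : StrictMono A := strictMono_nat_of_lt_succ A_lt_A_succ

lemma mul_A_succ_le_two_mul_A_add_two (n : ℕ) : A n * A (n + 1) ≤ 2 * A (n + 2) := by
  obtain ⟨d, hd⟩ := Nat.exists_eq_add_of_le (A_lt_A_succ n).le
  have hchoose : 2 * Nat.choose (A n + 1) 2 = (A n + 1) * A n := by
    rw [Nat.choose_two_right, Nat.add_sub_cancel]
    exact Nat.two_mul_div_two_of_even (Nat.even_mul_pred_self _)
  rw [A_add_two, hd, Nat.add_sub_cancel_left]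
  nlinarith

lemma A_succ_div_A_add_two_le (n : ℕ) :
    (A (n + 1) : ℝ) / A (n + 2) ≤ 2 / A n := by
  have hpos : ∀ m, (0 : ℝ) < A m := fun m => mod_cast A_pos m
  rw [div_le_div_iff₀ (hpos _) (hpos _)]
  have key : ((A n * A (n + 1) : ℕ) : ℝ) ≤ ((2 * A (n + 2) : ℕ) : ℝ) :=
    Nat.cast_le.mpr (mul_A_succ_le_two_mul_A_add_two n)
  push_cast at key
  linarith

theorem stmt_4 :
    Tendsto (fun n : ℕ => (A n : ℝ) / (A (n + 1) : ℝ)) atTop (nhds 0) := by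
  have hbound : Tendsto (fun n => (2 : ℝ) / A n) atTop (nhds 0) :=
    tendsto_const_nhds.div_atTop
      (tendsto_natCast_atTop_atTop.comp strictMono_A.tendsto_atTop)
  rw [← tendsto_add_atTop_iff_nat 1]
  refine squeeze_zero (fun n => by positivity) (fun n => ?_) hbound
  exact A_succ_div_A_add_two_le n
end
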